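/- Given a finite family 𝓕 of subsets of a finite set U, the number of exact covers (subfamilies 𝓕' ⊆ 𝓕 of pairwise disjoint sets whose union is U) equals the coefficient of U in Π over the distinct sets F ∈ 𝓕 of (1[∅] + 1[F]) computed in the convolution ring ℤ[U_{|U|}], where 1[F] is the indicator of the subset F. -/

import Mathlib

/-!
Induct on the family. Multiplying by `1[∅] + 1[F]` sends `P` to
`X ↦ P X + [F ⊆ X] · P (X ∖ F)`, and the exact covers of `X` by `insert F 𝓢` satisfy the same
recursion: those avoiding `F` are the exact covers of `X` by `𝓢`, and those containing `F`
correspond, by removing `F`, to the exact covers of `X ∖ F` by `𝓢`.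
-/

open scoped Classical

/-- Convolution product on the ring of integer-valued functions on subsets of a
finite ground set: `(e·f)_X = Σ_{Y ⊆ X} e_Y f_{X∖Y}`. -/
noncomputable def convMul {α : Type*} [DecidableEq α]
    (e f : Finset α → ℤ) : Finset α → ℤ :=
  fun X => ∑ Y ∈ X.powerset, e Y * f (X \ Y)

/-- The multiplicative identity `1[∅]`. -/
noncomputable def convOne {α : Type*} : Finset α → ℤ :=
  fun X => if X = ∅ then 1 else 0

/-- The indicator `1[F]` of a subset `F`. -/
noncomputable def convInd {α : Type*} (F : Finset α) : Finset α → ℤ :=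
  fun X => if X = F then 1 else 0

/-- The product of a list of elements of the convolution ring. -/
noncomputable def convProd {α : Type*} [DecidableEq α]
    (l : List (Finset α → ℤ)) : Finset α → ℤ :=
  l.foldr convMul convOne

open Finset

section ExactCover

variable {α : Type*} [DecidableEq α]

def IsExactCover (𝓕' : Finset (Finset α)) (X : Finset α) : Prop :=
  (∀ F ∈ 𝓕', ∀ G ∈ 𝓕', F ≠ G → Disjoint F G) ∧ 𝓕'.biUnion id = X

noncomputable def exactCoverCount (𝓢 : Finset (Finset α)) (X : Finset α) : ℕ :=
  #(𝓢.powerset.filter (IsExactCover · X))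

theorem isExactCover_empty_iff {X : Finset α} : IsExactCover ∅ X ↔ X = ∅ := by
  simp [IsExactCover, eq_comm]

theorem isExactCover_insert_iff {F X : Finset α} {𝓕' : Finset (Finset α)} (hF : F ∉ 𝓕') :
    IsExactCover (insert F 𝓕') X ↔ F ⊆ X ∧ IsExactCover 𝓕' (X \ F) := by
  constructor
  · rintro ⟨hdisj, rfl⟩
    have hdisjF : ∀ G ∈ 𝓕', Disjoint G F := fun G hG =>
      hdisj G (mem_insert_of_mem hG) F (mem_insert_self F 𝓕') (ne_of_mem_of_not_mem hG hF)
    refine ⟨subset_biUnion_of_mem id (mem_insert_self F 𝓕'),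
      fun A hA G hG => hdisj A (mem_insert_of_mem hA) G (mem_insert_of_mem hG), ?_⟩
    rw [biUnion_insert, id, union_sdiff_left, sdiff_eq_self_of_disjoint]
    exact (disjoint_biUnion_left _ _ _).mpr hdisjF
  · rintro ⟨hFX, hdisj, hunion⟩
    have hsub : ∀ G ∈ 𝓕', G ⊆ X \ F := fun G hG => hunion ▸ subset_biUnion_of_mem id hG
    refine ⟨?_, by rw [biUnion_insert, hunion, id, union_sdiff_of_subset hFX]⟩
    intro A hA G hG hne
    rcases mem_insert.mp hA with rfl | hA' <;> rcases mem_insert.mp hG with rfl | hG'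
    · exact absurd rfl hne
    · exact disjoint_sdiff.mono_right (hsub G hG')
    · exact sdiff_disjoint.mono_left (hsub A hA')
    · exact hdisj A hA' G hG' hne

theorem exactCoverCount_empty (X : Finset α) :
    exactCoverCount ∅ X = if X = ∅ then 1 else 0 := by
  simp only [exactCoverCount, powerset_empty, filter_singleton, isExactCover_empty_iff]
  split_ifs <;> rfl

theorem exactCoverCount_insert {F : Finset α} {𝓢 : Finset (Finset α)} (hF : F ∉ 𝓢)
    (X : Finset α) :
    exactCoverCount (insert F 𝓢) X =
      exactCoverCount 𝓢 X + if F ⊆ X then exactCoverCount 𝓢 (X \ F) else 0 := by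
  have hnotMem : ∀ 𝓕' ∈ 𝓢.powerset, F ∉ 𝓕' := fun _ h => notMem_of_mem_powerset_of_notMem h hF
  have hdisjoint : Disjoint (𝓢.powerset.filter (IsExactCover · X))
      ((𝓢.powerset.filter (fun 𝓕' => IsExactCover (insert F 𝓕') X)).image (insert F)) := by
    refine disjoint_left.mpr fun 𝓕' h𝓕' himage => ?_
    obtain ⟨𝓖, -, rfl⟩ := mem_image.mp himage
    exact hnotMem _ (filter_subset _ _ h𝓕') (mem_insert_self F 𝓖)
  have hinjOn : Set.InjOn (insert F) (𝓢.powerset.filter (fun 𝓕' => IsExactCover (insert F 𝓕') X) :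
      Set (Finset (Finset α))) := fun 𝓕' h𝓕' 𝓖 h𝓖 h => by
    rw [← erase_insert (hnotMem 𝓕' (mem_filter.mp h𝓕').1),
      ← erase_insert (hnotMem 𝓖 (mem_filter.mp h𝓖).1), h]
  rw [exactCoverCount, powerset_insert, filter_union, filter_image,
    card_union_of_disjoint hdisjoint, card_image_of_injOn hinjOn,
    filter_congr fun 𝓕' h𝓕' => isExactCover_insert_iff (hnotMem 𝓕' h𝓕')]
  by_cases hFX : F ⊆ X <;> simp [hFX, exactCoverCount]

theorem convMul_convOne_add_convInd_apply (F : Finset α) (P : Finset α → ℤ) (X : Finset α) :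
    convMul (convOne + convInd F) P X = P X + if F ⊆ X then P (X \ F) else 0 := by
  simp only [convMul, convOne, convInd, Pi.add_apply, add_mul, sum_add_distrib, ite_mul,
    one_mul, zero_mul, sum_ite_eq', mem_powerset, empty_subset, if_true, sdiff_empty]

theorem exactCoverCount_toFinset_eq_convProd {l : List (Finset α)} (hl : l.Nodup)
    (X : Finset α) :
    (exactCoverCount l.toFinset X : ℤ) = convProd (l.map (fun F => convOne + convInd F)) X := by
  induction l generalizing X with
  | nil =>
    simp only [List.toFinset_nil, exactCoverCount_empty, convProd, List.map_nil,
      List.foldr_nil, convOne]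
    split_ifs <;> rfl
  | cons F l ih =>
    obtain ⟨hFl, hl⟩ := List.nodup_cons.mp hl
    have hF : F ∉ l.toFinset := List.mem_toFinset.not.mpr hFl
    change _ = convMul (convOne + convInd F) (convProd (l.map (fun F => convOne + convInd F))) X
    rw [List.toFinset_cons, exactCoverCount_insert hF, convMul_convOne_add_convInd_apply,
      ← ih hl, ← ih hl]
    split_ifs <;> push_cast <;> rfl

end ExactCover

/-- The number of exact covers of `U` from the family `𝓕` equals the coefficient
of `U` in `Π_{F ∈ 𝓕} (1[∅] + 1[F])` in the convolution ring. -/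
theorem card_exact_covers_eq_convProd_coeff {α : Type*} [Fintype α] [DecidableEq α]
    (𝓕 : Finset (Finset α)) :
    ((𝓕.powerset.filter (fun 𝓕' =>
        (∀ F ∈ 𝓕', ∀ G ∈ 𝓕', F ≠ G → Disjoint F G) ∧
          𝓕'.biUnion id = Finset.univ)).card : ℤ)
      = convProd (𝓕.toList.map (fun F => convOne + convInd F)) Finset.univ := by
  have h := exactCoverCount_toFinset_eq_convProd 𝓕.nodup_toList Finset.univ
  rw [Finset.toList_toFinset] at h
  convert h using 2
  unfold exactCoverCount IsExactCover
  congr
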